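/- arXiv:1307.4334 — 9 statements merged into one kernel-verified Lean document; each statement's English description precedes it below -/
import Mathlib

section
/- Either there exists x ∈ ℝⁿ with Ax = b and x ≥ 0 (componentwise), or there exist v ∈ ℝᵐ and w ∈ ℝⁿ with w ≥ 0 componentwise and w ≠ 0 such that for every x̄ ∈ ℝⁿ with 0 ≤ x̄ ≤ u (componentwise), (vᵀA + wᵀ)x̄ < vᵀb + (1/(2n))·wᵀu. -/
/-!
Farkas' lemma, proved by induction on the set of vectors in the manner of Fourier–Motzkin
elimination: if a certificate `y` for the smaller set has `y ⬝ᵥ a j > 0` on the new vector, project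
all data along `a j` onto the hyperplane `y ⬝ᵥ · = 0` and apply the induction hypothesis there.

If `Ax = b, x ≥ 0` is infeasible, Farkas gives `y` with `Aᵀy ≤ 0 < yᵀb`. Scale `y` to `v` with
`vᵀb = ∑ uⱼ` and take `w = 1`; then `(vᵀA + wᵀ) x̄ ≤ ∑ x̄ⱼ ≤ ∑ uⱼ = vᵀb`, which is strictly less
than `vᵀb + wᵀu / (2n)`.
-/

open Matrix Finset Function

section Projection

variable {𝕜 ι : Type*} [Field 𝕜] [Fintype ι]

/-- Projection onto the hyperplane `y ⬝ᵥ · = 0` along `a`; when `y ⬝ᵥ a = 0` the division gives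
`0` and this is the identity. -/
def projAlong (y a : ι → 𝕜) : (ι → 𝕜) →ₗ[𝕜] ι → 𝕜 where
  toFun w := w - (y ⬝ᵥ w / y ⬝ᵥ a) • a
  map_add' w w' := by simp only [dotProduct_add, add_div, add_smul]; abel
  map_smul' c w := by
    simp only [dotProduct_smul, smul_eq_mul, mul_div_assoc, mul_smul, RingHom.id_apply, smul_sub]

theorem projAlong_apply (y a w : ι → 𝕜) : projAlong y a w = w - (y ⬝ᵥ w / y ⬝ᵥ a) • a := rfl

theorem projAlong_self {y a : ι → 𝕜} (h : y ⬝ᵥ a ≠ 0) : projAlong y a a = 0 := by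
  rw [projAlong_apply, div_self h, one_smul, sub_self]

theorem eq_smul_of_projAlong_eq_zero {y a w : ι → 𝕜} (h : projAlong y a w = 0) :
    w = (y ⬝ᵥ w / y ⬝ᵥ a) • a :=
  sub_eq_zero.mp h

theorem dotProduct_projAlong (z y a w : ι → 𝕜) :
    z ⬝ᵥ projAlong y a w = (z - (z ⬝ᵥ a / y ⬝ᵥ a) • y) ⬝ᵥ w := by
  simp only [projAlong_apply, dotProduct_sub, sub_dotProduct, dotProduct_smul, smul_dotProduct,
    smul_eq_mul]
  ring

end Projection

theorem sum_insert_update_smul {R M κ : Type*} [AddCommMonoid M] [SMul R M] [DecidableEq κ]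
    {s : Finset κ} {j : κ} (hj : j ∉ s) (c : κ → R) (γ : R) (a : κ → M) :
    ∑ i ∈ insert j s, update c j γ i • a i = γ • a j + ∑ i ∈ s, c i • a i := by
  rw [sum_insert hj, update_self]
  congr 1
  exact sum_congr rfl fun i hi => by rw [update_of_ne (ne_of_mem_of_not_mem hi hj)]

section Farkas

variable {𝕜 ι κ : Type*} [Field 𝕜] [LinearOrder 𝕜] [Fintype ι] [DecidableEq κ]
  {a : κ → ι → 𝕜} {s : Finset κ} {j : κ} {b y : ι → 𝕜}

theorem exists_nonneg_sum_insert_of_projAlong [IsStrictOrderedRing 𝕜] (hj : j ∉ s)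
    (hy : ∀ i ∈ s, y ⬝ᵥ a i ≤ 0) (hyb : 0 < y ⬝ᵥ b) (hyj : 0 < y ⬝ᵥ a j) {c : κ → 𝕜} (hc : 0 ≤ c)
    (hsum : ∑ i ∈ s, c i • projAlong y (a j) (a i) = projAlong y (a j) b) :
    ∃ c' : κ → 𝕜, 0 ≤ c' ∧ ∑ i ∈ insert j s, c' i • a i = b := by
  set r := b - ∑ i ∈ s, c i • a i with hr
  have hPr : projAlong y (a j) r = 0 := by
    simp only [hr, map_sub, map_sum, map_smul, hsum, sub_self]
  have hyr : 0 ≤ y ⬝ᵥ r := by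
    have : ∑ i ∈ s, c i * (y ⬝ᵥ a i) ≤ 0 :=
      sum_nonpos fun i hi => mul_nonpos_of_nonneg_of_nonpos (hc i) (hy i hi)
    simp only [hr, dotProduct_sub, dotProduct_sum, dotProduct_smul, smul_eq_mul]
    linarith
  refine ⟨update c j (y ⬝ᵥ r / y ⬝ᵥ a j),
    le_update_iff.2 ⟨div_nonneg hyr hyj.le, fun i _ => hc i⟩, ?_⟩
  rw [sum_insert_update_smul hj, ← eq_smul_of_projAlong_eq_zero hPr, hr, sub_add_cancel]

theorem exists_dotProduct_insert_nonpos_of_projAlong (hyj : y ⬝ᵥ a j ≠ 0) {z : ι → 𝕜}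
    (hz : ∀ i ∈ s, z ⬝ᵥ projAlong y (a j) (a i) ≤ 0) (hzb : 0 < z ⬝ᵥ projAlong y (a j) b) :
    ∃ y' : ι → 𝕜, (∀ i ∈ insert j s, y' ⬝ᵥ a i ≤ 0) ∧ 0 < y' ⬝ᵥ b := by
  refine ⟨z - (z ⬝ᵥ a j / y ⬝ᵥ a j) • y, forall_mem_insert _ _ _ |>.2 ⟨?_, ?_⟩, ?_⟩
  · rw [← dotProduct_projAlong, projAlong_self hyj, dotProduct_zero]
  · simpa only [dotProduct_projAlong] using hz
  · rwa [← dotProduct_projAlong]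

theorem farkas_finset [IsStrictOrderedRing 𝕜] (a : κ → ι → 𝕜) (s : Finset κ) (b : ι → 𝕜) :
    (∃ c : κ → 𝕜, 0 ≤ c ∧ ∑ i ∈ s, c i • a i = b) ∨
      ∃ y : ι → 𝕜, (∀ i ∈ s, y ⬝ᵥ a i ≤ 0) ∧ 0 < y ⬝ᵥ b := by
  induction s using Finset.induction_on generalizing a b with
  | empty =>
    rcases eq_or_ne b 0 with rfl | hb
    · exact .inl ⟨0, le_rfl, by simp⟩
    · refine .inr ⟨b, by simp, lt_of_le_of_ne ?_ (Ne.symm (dotProduct_self_eq_zero.not.2 hb))⟩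
      exact sum_nonneg fun i _ => mul_self_nonneg (b i)
  | insert j s hj ih =>
    rcases ih a b with ⟨c, hc, hsum⟩ | ⟨y, hy, hyb⟩
    · refine .inl ⟨update c j 0, le_update_iff.2 ⟨le_rfl, fun i _ => hc i⟩, ?_⟩
      rw [sum_insert_update_smul hj, zero_smul, zero_add, hsum]
    rcases le_or_gt (y ⬝ᵥ a j) 0 with hyj | hyj
    · exact .inr ⟨y, forall_mem_insert _ _ _ |>.2 ⟨hyj, hy⟩, hyb⟩
    rcases ih (fun i => projAlong y (a j) (a i)) (projAlong y (a j) b) with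
      ⟨c, hc, hsum⟩ | ⟨z, hz, hzb⟩
    · exact .inl (exists_nonneg_sum_insert_of_projAlong hj hy hyb hyj hc hsum)
    · exact .inr (exists_dotProduct_insert_nonpos_of_projAlong hyj.ne' hz hzb)

end Farkas

theorem Matrix.farkas {𝕜 ι κ : Type*} [Field 𝕜] [LinearOrder 𝕜] [IsStrictOrderedRing 𝕜]
    [Fintype ι] [Fintype κ] (A : Matrix ι κ 𝕜) (b : ι → 𝕜) :
    (∃ x : κ → 𝕜, 0 ≤ x ∧ A *ᵥ x = b) ∨ ∃ y : ι → 𝕜, Aᵀ *ᵥ y ≤ 0 ∧ 0 < y ⬝ᵥ b := by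
  classical
  refine (farkas_finset (fun j => Aᵀ j) univ b).imp (fun ⟨x, hx, hAx⟩ => ⟨x, hx, ?_⟩)
    fun ⟨y, hy, hyb⟩ => ⟨y, fun j => ?_, hyb⟩
  · rw [← vecMul_transpose, vecMul_eq_sum, hAx]
  · rw [mulVec_transpose]
    exact hy j (mem_univ j)

theorem exists_separating_of_farkas_certificate {𝕜 ι κ : Type*} [Field 𝕜] [LinearOrder 𝕜]
    [IsStrictOrderedRing 𝕜] [Fintype ι] [Fintype κ] [Nonempty κ] {A : Matrix ι κ 𝕜}
    {b y : ι → 𝕜} (hy : Aᵀ *ᵥ y ≤ 0) (hyb : 0 < y ⬝ᵥ b) {u : κ → 𝕜} (hu : ∀ j, 0 < u j)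
    {ε : 𝕜} (hε : 0 < ε) :
    ∃ (v : ι → 𝕜) (w : κ → 𝕜), (∀ j, 0 ≤ w j) ∧ w ≠ 0 ∧
      ∀ xbar : κ → 𝕜, (∀ j, 0 ≤ xbar j) → (∀ j, xbar j ≤ u j) →
        (Aᵀ *ᵥ v + w) ⬝ᵥ xbar < v ⬝ᵥ b + ε * (w ⬝ᵥ u) := by
  have hu1 : 0 < 1 ⬝ᵥ u := by
    rw [one_dotProduct]
    exact sum_pos (fun j _ => hu j) univ_nonempty
  refine ⟨(1 ⬝ᵥ u / y ⬝ᵥ b) • y, 1, fun _ => zero_le_one, one_ne_zero, fun xbar hx hxu => ?_⟩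
  have hyx : (Aᵀ *ᵥ y) ⬝ᵥ xbar ≤ 0 := by
    simpa using dotProduct_le_dotProduct_of_nonneg_right hy hx
  have h1x : 1 ⬝ᵥ xbar ≤ 1 ⬝ᵥ u := dotProduct_le_dotProduct_of_nonneg_left hxu zero_le_one
  have hvb : (1 ⬝ᵥ u / y ⬝ᵥ b) • y ⬝ᵥ b = 1 ⬝ᵥ u := by
    rw [smul_dotProduct, smul_eq_mul, div_mul_cancel₀ _ hyb.ne']
  calc (Aᵀ *ᵥ (1 ⬝ᵥ u / y ⬝ᵥ b) • y + 1) ⬝ᵥ xbar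
      = (1 ⬝ᵥ u / y ⬝ᵥ b) * ((Aᵀ *ᵥ y) ⬝ᵥ xbar) + 1 ⬝ᵥ xbar := by
        rw [mulVec_smul, add_dotProduct, smul_dotProduct, smul_eq_mul]
    _ ≤ 1 ⬝ᵥ u := by linarith [mul_nonpos_of_nonneg_of_nonpos (div_pos hu1 hyb).le hyx]
    _ < _ := by rw [hvb]; linarith [mul_pos hε hu1]

theorem statement0_general {m n : ℕ} (hn : 0 < n)
    (A : Matrix (Fin m) (Fin n) ℤ) (b : Fin m → ℤ)
    (u : Fin n → ℝ) (hu : ∀ i, 0 < u i) :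
    (∃ x : Fin n → ℝ,
        (A.map (Int.cast : ℤ → ℝ)) *ᵥ x = (fun i => (b i : ℝ)) ∧ ∀ j, 0 ≤ x j) ∨
    (∃ (v : Fin m → ℝ) (w : Fin n → ℝ), (∀ j, 0 ≤ w j) ∧ w ≠ 0 ∧
        ∀ xbar : Fin n → ℝ, (∀ j, 0 ≤ xbar j) → (∀ j, xbar j ≤ u j) →
          ((A.map (Int.cast : ℤ → ℝ))ᵀ *ᵥ v + w) ⬝ᵥ xbar <
            v ⬝ᵥ (fun i => (b i : ℝ)) + (1 / (2 * (n : ℝ))) * (w ⬝ᵥ u)) := by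
  have : Nonempty (Fin n) := ⟨⟨0, hn⟩⟩
  exact (Matrix.farkas (A.map (Int.cast : ℤ → ℝ)) fun i => (b i : ℝ)).imp
    (fun ⟨x, hx, hAx⟩ => ⟨x, hAx, hx⟩)
    fun ⟨y, hy, hyb⟩ => exists_separating_of_farkas_certificate hy hyb hu (by positivity)

/-- Theorem 1 of the paper (dichotomy of the Basic subroutine): either the system
`Ax = b, x ≥ 0` has a solution, or there is a separating pair `(v, w)`. -/
theorem statement0 {m n : ℕ} (hm : 0 < m) (hn : 0 < n)
    (A : Matrix (Fin m) (Fin n) ℤ) (b : Fin m → ℤ)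
    (hA : (A.map (Int.cast : ℤ → ℝ)).rank = m)
    (u : Fin n → ℝ) (hu : ∀ i, 0 < u i) :
    (∃ x : Fin n → ℝ,
        (A.map (Int.cast : ℤ → ℝ)) *ᵥ x = (fun i => (b i : ℝ)) ∧ ∀ j, 0 ≤ x j) ∨
    (∃ (v : Fin m → ℝ) (w : Fin n → ℝ), (∀ j, 0 ≤ w j) ∧ w ≠ 0 ∧
        ∀ xbar : Fin n → ℝ, (∀ j, 0 ≤ xbar j) → (∀ j, xbar j ≤ u j) →
          ((A.map (Int.cast : ℤ → ℝ))ᵀ *ᵥ v + w) ⬝ᵥ xbar <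
            v ⬝ᵥ (fun i => (b i : ℝ)) + (1 / (2 * (n : ℝ))) * (w ⬝ᵥ u)) :=
  statement0_general hn A b u hu
end

section
/- Suppose v ∈ ℝᵐ and w ∈ ℝⁿ with w ≥ 0 componentwise and w ≠ 0 satisfy (vᵀA + wᵀ)x̄ < vᵀb + (1/(2n))·wᵀu for every x̄ ∈ ℝⁿ with 0 ≤ x̄ ≤ u. Then: (i) every x̄ ∈ ℝⁿ with Ax̄ = b and 0 ≤ x̄ ≤ u satisfies, for every index j with w_j > 0, x̄_j ≤ (Σ_{i=1}^n u_i w_i)/(2n w_j); and (ii) if p is an index maximizing u_j w_j over j = 1,…,n, then w_p > 0 and (Σ_{i=1}^n u_i w_i)/(2n w_p) ≤ u_p/2. -/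
open Matrix

/-- Claim 1 of the paper: from a separating pair `(v, w)` one derives new upper
bounds `u'_j = (∑ u_i w_i)/(2 n w_j)` valid for all solutions in the box, and the
bound at a maximizer `p` of `u_j w_j` is at most `u_p / 2`. -/
theorem statement1 {m n : ℕ} (hn : 0 < n)
    (A : Matrix (Fin m) (Fin n) ℝ) (b : Fin m → ℝ)
    (u : Fin n → ℝ) (hu : ∀ i, 0 < u i)
    (v : Fin m → ℝ) (w : Fin n → ℝ) (hw : ∀ j, 0 ≤ w j) (hw0 : w ≠ 0)
    (hsep : ∀ xbar : Fin n → ℝ, (∀ j, 0 ≤ xbar j) → (∀ j, xbar j ≤ u j) →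
      (Aᵀ *ᵥ v + w) ⬝ᵥ xbar < v ⬝ᵥ b + (1 / (2 * (n : ℝ))) * (w ⬝ᵥ u)) :
    (∀ xbar : Fin n → ℝ, A *ᵥ xbar = b → (∀ j, 0 ≤ xbar j) → (∀ j, xbar j ≤ u j) →
      ∀ j, 0 < w j → xbar j ≤ (∑ i, u i * w i) / (2 * (n : ℝ) * w j)) ∧
    (∀ p : Fin n, (∀ j, u j * w j ≤ u p * w p) →
      0 < w p ∧ (∑ i, u i * w i) / (2 * (n : ℝ) * w p) ≤ u p / 2) := by
  have hn' : (0 : ℝ) < 2 * (n : ℝ) := by positivity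
  constructor
  · intro xbar hAx hx0 hxu j hwj
    have hs := hsep xbar hx0 hxu
    have hkey : (Aᵀ *ᵥ v) ⬝ᵥ xbar = v ⬝ᵥ b := by
      rw [Matrix.mulVec_transpose, ← Matrix.dotProduct_mulVec, hAx]
    have hwx : w ⬝ᵥ xbar < (1 / (2 * (n : ℝ))) * (w ⬝ᵥ u) := by
      rw [add_dotProduct, hkey] at hs
      linarith
    have h1 : w j * xbar j ≤ w ⬝ᵥ xbar := by
      unfold dotProduct
      calc w j * xbar j = ∑ i ∈ {j}, w i * xbar i := by simp
        _ ≤ ∑ i, w i * xbar i :=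
          Finset.sum_le_sum_of_subset_of_nonneg (Finset.subset_univ _)
            (fun i _ _ => mul_nonneg (hw i) (hx0 i))
    have hsum : w ⬝ᵥ u = ∑ i, u i * w i := by
      unfold dotProduct; exact Finset.sum_congr rfl fun i _ => mul_comm _ _
    rw [hsum] at hwx
    have h2 : (w ⬝ᵥ xbar) * (2 * (n : ℝ)) < ∑ i, u i * w i := by
      rw [one_div, inv_mul_eq_div] at hwx
      exact (lt_div_iff₀ hn').mp hwx
    rw [le_div_iff₀ (by positivity)]
    nlinarith [h2, mul_le_mul_of_nonneg_left h1 hn'.le]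
  · intro p hp
    have hwp : 0 < w p := by
      obtain ⟨k, hk⟩ : ∃ k, w k ≠ 0 := by
        by_contra h
        push_neg at h
        exact hw0 (funext h)
      have hk' : 0 < u k * w k := mul_pos (hu k) (lt_of_le_of_ne (hw k) (Ne.symm hk))
      have := lt_of_lt_of_le hk' (hp k)
      nlinarith [this, hu p]
    refine ⟨hwp, ?_⟩
    rw [div_le_div_iff₀ (by positivity) (by norm_num)]
    have hsum : ∑ i, u i * w i ≤ ∑ _i : Fin n, u p * w p :=
      Finset.sum_le_sum fun i _ => hp i
    simp only [Finset.sum_const, Finset.card_univ, Fintype.card_fin, nsmul_eq_mul] at hsum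
    nlinarith [hsum]
end

section
/- Let z ∈ 𝒜 be such that ⟨z, x⟩_D ≥ ‖z‖_D² for every x ∈ P̃, and suppose z_i < 0 for some index i. Let K := {x ∈ 𝒜 : ⟨z, x⟩_D ≥ ‖z‖_D², x_i ≥ ℓ_i}. If K ≠ ∅ and z′ ∈ K satisfies ‖z′‖_D ≤ ‖x‖_D for all x ∈ K (i.e., z′ is a minimum-D-norm point of K), then ⟨z′, x⟩_D ≥ ‖z′‖_D² for every x ∈ P̃, and ‖z′‖_D² > ‖z‖_D² + 1/n². -/
open Matrix

/-- Lemma 2 of the paper: one step of the Bubble algorithm. If the inequality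
`⟨z, x⟩_D ≥ ‖z‖_D²` is valid for `P̃`, `z_i < 0`, and `z'` is the minimum-`D`-norm
point of `K = {x ∈ 𝒜 : ⟨z, x⟩_D ≥ ‖z‖_D², x_i ≥ ℓ_i}`, then `⟨z', x⟩_D ≥ ‖z'‖_D²`
is valid for `P̃` and `‖z'‖_D² > ‖z‖_D² + 1/n²`. -/
theorem statement3 {m n : ℕ} (hn : 0 < n)
    (A : Matrix (Fin m) (Fin n) ℝ) (b : Fin m → ℝ)
    (u : Fin n → ℝ) (hu : ∀ i, 0 < u i)
    (ℓ : Fin n → ℝ) (hℓ : ℓ = fun i => u i / (2 * (n : ℝ)))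
    (D : Matrix (Fin n) (Fin n) ℝ) (hD : D = Matrix.diagonal fun i => 4 / u i ^ 2)
    (z : Fin n → ℝ) (hzA : A *ᵥ z = b)
    (hvalid : ∀ x : Fin n → ℝ, A *ᵥ x = b → (∀ j, ℓ j ≤ x j) →
      z ⬝ᵥ D *ᵥ z ≤ z ⬝ᵥ D *ᵥ x)
    (i : Fin n) (hzi : z i < 0)
    (K : Set (Fin n → ℝ))
    (hK : K = {x | A *ᵥ x = b ∧ z ⬝ᵥ D *ᵥ z ≤ z ⬝ᵥ D *ᵥ x ∧ ℓ i ≤ x i})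
    (z' : Fin n → ℝ) (hz'K : z' ∈ K)
    (hz'min : ∀ x ∈ K, Real.sqrt (z' ⬝ᵥ D *ᵥ z') ≤ Real.sqrt (x ⬝ᵥ D *ᵥ x)) :
    (∀ x : Fin n → ℝ, A *ᵥ x = b → (∀ j, ℓ j ≤ x j) →
      z' ⬝ᵥ D *ᵥ z' ≤ z' ⬝ᵥ D *ᵥ x) ∧
    z ⬝ᵥ D *ᵥ z + 1 / (n : ℝ) ^ 2 < z' ⬝ᵥ D *ᵥ z' := by
  subst hD hK
  set d : Fin n → ℝ := fun i => 4 / u i ^ 2 with hd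
  have hdpos : ∀ j, 0 < d j := fun j => div_pos (by norm_num) (pow_pos (hu j) 2)
  have hdot : ∀ x y : Fin n → ℝ,
      x ⬝ᵥ (Matrix.diagonal d) *ᵥ y = ∑ j, d j * (x j * y j) := by
    intro x y
    simp [dotProduct, Matrix.mulVec_diagonal]
    exact Finset.sum_congr rfl fun j _ => by ring
  have hQnn : ∀ x : Fin n → ℝ, 0 ≤ ∑ j, d j * (x j * x j) := fun x =>
    Finset.sum_nonneg fun j _ => mul_nonneg (hdpos j).le (mul_self_nonneg _)
  obtain ⟨hz'A, hz'v, hz'i⟩ := hz'K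
  rw [hdot, hdot] at hz'v
  -- squared minimality
  have hmin : ∀ x : Fin n → ℝ, A *ᵥ x = b →
      (∑ j, d j * (z j * z j)) ≤ (∑ j, d j * (z j * x j)) → ℓ i ≤ x i →
      (∑ j, d j * (z' j * z' j)) ≤ ∑ j, d j * (x j * x j) := by
    intro x hxA hxv hxi
    have h := hz'min x ⟨hxA, by rw [hdot, hdot]; exact hxv, hxi⟩
    rw [hdot, hdot] at h
    exact (Real.sqrt_le_sqrt_iff (hQnn x)).mp h
  -- Part 1
  have part1 : ∀ x : Fin n → ℝ, A *ᵥ x = b → (∀ j, ℓ j ≤ x j) →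
      (∑ j, d j * (z' j * z' j)) ≤ ∑ j, d j * (z' j * x j) := by
    intro x hxA hxℓ
    have hxv := hvalid x hxA hxℓ
    rw [hdot, hdot] at hxv
    set B : ℝ := ∑ j, d j * (z' j * (x j - z' j)) with hB
    set Qd : ℝ := ∑ j, d j * ((x j - z' j) * (x j - z' j)) with hQd
    have key : ∀ t : ℝ, 0 < t → t ≤ 1 → 0 ≤ 2*t*B + t^2*Qd := by
      intro t ht0 ht1
      set y : Fin n → ℝ := fun j => z' j + t * (x j - z' j) with hy
      have hyeq : y = z' + t • (x - z') := rfl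
      have hyA : A *ᵥ y = b := by
        rw [hyeq, Matrix.mulVec_add, Matrix.mulVec_smul, Matrix.mulVec_sub, hz'A, hxA]
        simp
      have hyv : (∑ j, d j * (z j * z j)) ≤ ∑ j, d j * (z j * y j) := by
        have hsum : (∑ j, d j * (z j * y j)) =
            (1 - t) * (∑ j, d j * (z j * z' j)) + t * (∑ j, d j * (z j * x j)) := by
          simp only [Finset.mul_sum, ← Finset.sum_add_distrib]
          exact Finset.sum_congr rfl fun j _ => by simp only [hy]; ring
        rw [hsum]
        nlinarith [hz'v, hxv]
      have hyi : ℓ i ≤ y i := by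
        simp only [hy]
        have := hxℓ i
        nlinarith [hz'i]
      have hQle := hmin y hyA hyv hyi
      have hexp : (∑ j, d j * (y j * y j)) =
          (∑ j, d j * (z' j * z' j)) + 2*t*B + t^2*Qd := by
        simp only [hB, hQd, Finset.mul_sum, ← Finset.sum_add_distrib]
        exact Finset.sum_congr rfl fun j _ => by simp only [hy]; ring
      rw [hexp] at hQle
      linarith
    have hBnn : 0 ≤ B := by
      by_contra hB'
      push_neg at hB'
      have hQdnn : 0 ≤ Qd := hQnn _
      rcases eq_or_lt_of_le hQdnn with hQ0 | hQ0
      · have := key 1 one_pos le_rfl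
        rw [← hQ0] at this
        nlinarith
      · set t : ℝ := min 1 (-B / Qd) with ht
        have ht0 : 0 < t := lt_min one_pos (div_pos (by linarith) hQ0)
        have ht1 : t ≤ 1 := min_le_left _ _
        have htQd : t * Qd ≤ -B := by
          have h2 : t ≤ -B / Qd := min_le_right _ _
          exact (le_div_iff₀ hQ0).mp h2
        have hk := key t ht0 ht1
        nlinarith [mul_le_mul_of_nonneg_left htQd ht0.le]
    have hBeq : B = (∑ j, d j * (z' j * x j)) - ∑ j, d j * (z' j * z' j) := by
      simp only [hB, ← Finset.sum_sub_distrib]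
      exact Finset.sum_congr rfl fun j _ => by ring
    linarith [hBeq ▸ hBnn]
  refine ⟨fun x hxA hxℓ => by rw [hdot, hdot]; exact part1 x hxA hxℓ, ?_⟩
  -- Part 2
  rw [hdot, hdot]
  have hid : (∑ j, d j * ((z' j - z j) * (z' j - z j))) =
      (∑ j, d j * (z' j * z' j)) - 2 * (∑ j, d j * (z j * z' j))
        + ∑ j, d j * (z j * z j) := by
    simp only [Finset.mul_sum, ← Finset.sum_sub_distrib, ← Finset.sum_add_distrib]
    exact Finset.sum_congr rfl fun j _ => by ring
  have hℓi : u i / (2 * (n : ℝ)) ≤ z' i := by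
    have := hz'i; rw [hℓ] at this; exact this
  have hℓpos : 0 < u i / (2 * (n : ℝ)) :=
    div_pos (hu i) (by positivity)
  have hsingle : d i * ((z' i - z i) * (z' i - z i)) ≤
      ∑ j, d j * ((z' j - z j) * (z' j - z j)) :=
    Finset.single_le_sum (f := fun j => d j * ((z' j - z j) * (z' j - z j)))
      (fun j _ => mul_nonneg (hdpos j).le (mul_self_nonneg _)) (Finset.mem_univ i)
  have hgap : u i / (2 * (n : ℝ)) < z' i - z i := by linarith
  have hsq : (u i / (2 * (n : ℝ))) * (u i / (2 * (n : ℝ))) <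
      (z' i - z i) * (z' i - z i) :=
    mul_lt_mul'' hgap hgap hℓpos.le hℓpos.le
  have hval : d i * ((u i / (2 * (n : ℝ))) * (u i / (2 * (n : ℝ)))) = 1 / (n : ℝ) ^ 2 := by
    have hui : u i ≠ 0 := (hu i).ne'
    have hn' : (n : ℝ) ≠ 0 := Nat.cast_ne_zero.mpr hn.ne'
    simp only [hd]
    field_simp
    ring
  have hdid : d i * ((u i / (2 * (n : ℝ))) * (u i / (2 * (n : ℝ)))) <
      d i * ((z' i - z i) * (z' i - z i)) := by
    exact mul_lt_mul_of_pos_left hsq (hdpos i)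
  rw [hval] at hdid
  linarith
end

section
/- Let 𝒜 := {x ∈ ℝⁿ : Ax = b} be nonempty, let r⁰ be a minimum-D-norm point of 𝒜, and let α, α′ ∈ ℝⁿ satisfy Aα = 0 and Aα′ = 0. For β, β′ ∈ ℝ, set K̄ := {x ∈ ℝⁿ : ⟨α, x⟩_D ≥ β, ⟨α′, x⟩_D ≥ β′} and K := 𝒜 ∩ K̄. If K̄ ≠ ∅ and z̄ ∈ K̄ is the point of K̄ at minimum D-distance from r⁰ (i.e., ‖z̄ − r⁰‖_D ≤ ‖x − r⁰‖_D for all x ∈ K̄), then z̄ ∈ 𝒜 (so z̄ ∈ K) and z̄ is a minimum-D-norm point of K. In particular, K ≠ ∅ if and only if K̄ ≠ ∅. -/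
/-!
The minimum-`D`-norm point `r⁰` of `{x | Ax = b}` is `D`-orthogonal to `W = ker A`, so on
`r⁰ + W` the squared `D`-norm is `‖r⁰‖² + ‖x - r⁰‖²`. Since `α, α' ∈ W`, the set `K̄` is
invariant under translations by `Wᗮ`; removing the `Wᗮ`-component of `z̄ - r⁰` therefore stays
in `K̄` and, by Pythagoras, strictly decreases the distance to `r⁰` unless that component
vanishes. Hence `z̄ - r⁰ ∈ W`, and the two Pythagorean identities turn the minimality of the
distance into the minimality of the norm.
-/

open Matrix

namespace Submodule

variable {E : Type*} [NormedAddCommGroup E] [InnerProductSpace ℝ E] {W : Submodule ℝ E}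

theorem mem_orthogonal_of_forall_norm_le_norm_add {r : E} (hr : ∀ w ∈ W, ‖r‖ ≤ ‖r + w‖) :
    r ∈ Wᗮ := by
  have hinf : ‖r - 0‖ = ⨅ w : (W : Set E), ‖r - w‖ := by
    have hbdd : BddBelow (Set.range fun w : (W : Set E) => ‖r - w‖) :=
      ⟨0, Set.forall_mem_range.2 fun _ => norm_nonneg _⟩
    refine le_antisymm (le_ciInf fun w => ?_) (ciInf_le hbdd ⟨0, W.zero_mem⟩)
    simpa [sub_eq_add_neg] using hr (-w) (W.neg_mem w.2)
  rw [mem_orthogonal']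
  simpa [real_inner_comm] using (W.norm_eq_iInf_iff_real_inner_eq_zero W.zero_mem).1 hinf

theorem norm_sq_eq_norm_sq_add_norm_sub_sq {r y : E} (hr : r ∈ Wᗮ) (hy : y - r ∈ W) :
    ‖y‖ ^ 2 = ‖r‖ ^ 2 + ‖y - r‖ ^ 2 := by
  simp only [sq]
  rw [← norm_add_sq_eq_norm_sq_add_norm_sq_real (inner_left_of_mem_orthogonal hy hr),
    add_sub_cancel]

theorem sub_mem_of_forall_norm_sub_le [W.HasOrthogonalProjection] {K : Set E}
    (hK : ∀ x ∈ K, ∀ v ∈ Wᗮ, x - v ∈ K) {r z : E} (hz : z ∈ K)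
    (hmin : ∀ x ∈ K, ‖z - r‖ ≤ ‖x - r‖) : z - r ∈ W := by
  obtain ⟨u, hu, v, hv, huv⟩ := W.exists_add_mem_mem_orthogonal (z - r)
  have hle : ‖u + v‖ ≤ ‖u‖ := by
    have hzv : z - v - r = u := by rw [sub_right_comm, huv, add_sub_cancel_right]
    simpa only [hzv, huv] using hmin (z - v) (hK z hz v hv)
  have hpyth := norm_add_sq_eq_norm_sq_add_norm_sq_real (inner_right_of_mem_orthogonal hu hv)
  have hv0 : v = 0 := by
    rw [← norm_eq_zero]
    nlinarith [norm_nonneg v, norm_nonneg (u + v), norm_nonneg u]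
  simpa [huv, hv0] using hu

theorem sub_mem_and_norm_le_of_forall_norm_sub_le [FiniteDimensional ℝ W] {K : Set E}
    (hK : ∀ x ∈ K, ∀ v ∈ Wᗮ, x - v ∈ K) {r z : E} (hr : ∀ w ∈ W, ‖r‖ ≤ ‖r + w‖) (hz : z ∈ K)
    (hmin : ∀ x ∈ K, ‖z - r‖ ≤ ‖x - r‖) :
    z - r ∈ W ∧ ∀ x ∈ K, x - r ∈ W → ‖z‖ ≤ ‖x‖ := by
  have hr' := mem_orthogonal_of_forall_norm_le_norm_add hr
  have hzr := sub_mem_of_forall_norm_sub_le hK hz hmin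
  refine ⟨hzr, fun x hx hxr => ?_⟩
  have hdist := hmin x hx
  have hz_sq := norm_sq_eq_norm_sq_add_norm_sub_sq hr' hzr
  have hx_sq := norm_sq_eq_norm_sq_add_norm_sub_sq hr' hxr
  nlinarith [norm_nonneg z, norm_nonneg x, norm_nonneg (z - r)]

end Submodule

namespace Matrix.PosDef

variable {n : Type*} [Fintype n] {D : Matrix n n ℝ}

theorem inner_toInnerProductSpace (hD : D.PosDef) (x y : n → ℝ) :
    @inner ℝ _ (D.toInnerProductSpace hD.posSemidef).toInner x y = x ⬝ᵥ D *ᵥ y := by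
  change (D *ᵥ y) ⬝ᵥ star x = _
  rw [dotProduct_comm, star_trivial]

theorem norm_toNormedAddCommGroup (hD : D.PosDef) (x : n → ℝ) :
    @Norm.norm _ (D.toNormedAddCommGroup hD).toNorm x = √(x ⬝ᵥ D *ᵥ x) := by
  rw [← inner_toInnerProductSpace hD]
  rfl

theorem sub_mem_and_sqrt_le_of_forall_sqrt_le (hD : D.PosDef) (W : Submodule ℝ (n → ℝ))
    {K : Set (n → ℝ)}
    (hK : ∀ x ∈ K, ∀ v, (∀ w ∈ W, w ⬝ᵥ D *ᵥ v = 0) → x - v ∈ K) {r z : n → ℝ}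
    (hr : ∀ w ∈ W, √(r ⬝ᵥ D *ᵥ r) ≤ √((r + w) ⬝ᵥ D *ᵥ (r + w))) (hz : z ∈ K)
    (hmin : ∀ x ∈ K, √((z - r) ⬝ᵥ D *ᵥ (z - r)) ≤ √((x - r) ⬝ᵥ D *ᵥ (x - r))) :
    z - r ∈ W ∧ ∀ x ∈ K, x - r ∈ W → √(z ⬝ᵥ D *ᵥ z) ≤ √(x ⬝ᵥ D *ᵥ x) := by
  let _ : NormedAddCommGroup (n → ℝ) := D.toNormedAddCommGroup hD
  -- The explicit type keeps instance search from using the sup-norm structure of `n → ℝ`.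
  let _ : @InnerProductSpace ℝ (n → ℝ) _ (D.toNormedAddCommGroup hD).toSeminormedAddCommGroup :=
    D.toInnerProductSpace hD.posSemidef
  simp only [← norm_toNormedAddCommGroup hD] at hr hmin ⊢
  refine Submodule.sub_mem_and_norm_le_of_forall_norm_sub_le (W := W)
    (fun x hx v hv => hK x hx v fun w hw => ?_) hr hz hmin
  rw [← inner_toInnerProductSpace hD]
  exact Submodule.inner_right_of_mem_orthogonal hw hv

end Matrix.PosDef

/-- Claim 2 of the paper: if `zbar` is the point of
`K̄ = {x : ⟨α, x⟩_D ≥ β, ⟨α', x⟩_D ≥ β'}` (with `Aα = Aα' = 0`) at minimum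
`D`-distance from `r⁰`, the minimum-`D`-norm point of `𝒜 = {x : Ax = b}`, then
`zbar ∈ 𝒜`, hence `zbar` is a minimum-`D`-norm point of `K = 𝒜 ∩ K̄`; in
particular `K ≠ ∅` iff `K̄ ≠ ∅`. -/
theorem statement9 {m n : ℕ}
    (A : Matrix (Fin m) (Fin n) ℝ) (b : Fin m → ℝ)
    (D : Matrix (Fin n) (Fin n) ℝ) (hD : D.PosDef)
    (r0 : Fin n → ℝ) (hr0A : A *ᵥ r0 = b)
    (hr0min : ∀ x : Fin n → ℝ, A *ᵥ x = b →
      Real.sqrt (r0 ⬝ᵥ D *ᵥ r0) ≤ Real.sqrt (x ⬝ᵥ D *ᵥ x))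
    (α α' : Fin n → ℝ) (hα : A *ᵥ α = 0) (hα' : A *ᵥ α' = 0)
    (β β' : ℝ)
    (Kbar : Set (Fin n → ℝ))
    (hKbar : Kbar = {x | β ≤ α ⬝ᵥ D *ᵥ x ∧ β' ≤ α' ⬝ᵥ D *ᵥ x})
    (zbar : Fin n → ℝ) (hzbar : zbar ∈ Kbar)
    (hzbarmin : ∀ x ∈ Kbar,
      Real.sqrt ((zbar - r0) ⬝ᵥ D *ᵥ (zbar - r0)) ≤
        Real.sqrt ((x - r0) ⬝ᵥ D *ᵥ (x - r0))) :
    A *ᵥ zbar = b ∧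
    (∀ x : Fin n → ℝ, A *ᵥ x = b → x ∈ Kbar →
      Real.sqrt (zbar ⬝ᵥ D *ᵥ zbar) ≤ Real.sqrt (x ⬝ᵥ D *ᵥ x)) ∧
    ({x : Fin n → ℝ | A *ᵥ x = b} ∩ Kbar).Nonempty := by
  set W := LinearMap.ker A.mulVecLin
  have hsub : ∀ x, x - r0 ∈ W ↔ A *ᵥ x = b := fun x => by
    rw [LinearMap.mem_ker, mulVecLin_apply, mulVec_sub, hr0A, sub_eq_zero]
  have hr0 : ∀ w ∈ W, √(r0 ⬝ᵥ D *ᵥ r0) ≤ √((r0 + w) ⬝ᵥ D *ᵥ (r0 + w)) := fun w hw =>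
    hr0min _ ((hsub _).1 (by rwa [add_sub_cancel_left]))
  have hKbar_inv : ∀ x ∈ Kbar, ∀ v, (∀ w ∈ W, w ⬝ᵥ D *ᵥ v = 0) → x - v ∈ Kbar := by
    intro x hx v hv
    rw [hKbar] at hx ⊢
    simpa only [Set.mem_ofPred_eq, mulVec_sub, dotProduct_sub, hv α hα, hv α' hα', sub_zero]
      using hx
  obtain ⟨hzW, hzmin⟩ := hD.sub_mem_and_sqrt_le_of_forall_sqrt_le W hKbar_inv hr0 hzbar hzbarmin
  have hAz : A *ᵥ zbar = b := (hsub zbar).1 hzW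
  exact ⟨hAz, fun x hxA hxK => hzmin x hxK ((hsub x).2 hxA), zbar, hAz, hzbar⟩
end

section
/- Let q ≥ 16n⁴ be a real number. Let r⁰ ∈ ℝⁿ, let α¹,…,αⁿ ∈ ℝⁿ satisfy ‖αʲ‖_D = 1 and ⟨r⁰, αʲ⟩_D = 0 for all j, and let β₁,…,βₙ ∈ ℝ. Let λ ∈ ℝⁿ with λ ≥ 0 componentwise, set α := Σ_{j=1}^n λ_j αʲ and β := Σ_{j=1}^n λ_j β_j, and assume ‖α‖_D = 1, β > 0, and |β_j| ≤ β whenever λ_j > 0. Let z := r⁰ + βα and assume ‖z‖_D ≤ 2√n. Let λ̂ ∈ ℝⁿ satisfy |λ̂_j − λ_j| ≤ 1/(2q) for all j and λ̂_j = 0 whenever λ_j = 0, and set γ := Σ_{j=1}^n λ̂_j αʲ and δ := Σ_{j=1}^n λ̂_j β_j. Then ‖α − γ‖_D ≤ n/(2q), |β − δ| ≤ nβ/(2q), δ > 0, γ ≠ 0, and the point z̃ := r⁰ + (δ/‖γ‖_D²)·γ satisfies ‖z‖_D² − ‖z̃‖_D² ≤ 1/(2n²). -/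
/-!
Since `r⁰` is `D`-orthogonal to every `αʲ`, Pythagoras gives `‖z‖² = ‖r⁰‖² + β²` and
`‖z̃‖² = ‖r⁰‖² + δ²/‖γ‖²`. Each multiplier moves by at most `1/(2q)`, so with `e := n/(2q)` we get
`‖α - γ‖ ≤ e` (unit vectors) and `|β - δ| ≤ eβ` (only multipliers with `λ_j > 0` move, and then
`|β_j| ≤ β`). Hence `δ ≥ (1 - e)β` and `‖γ‖ ≤ 1 + e`, so
`β² - δ²/‖γ‖² ≤ β²(1 - (1-e)²/(1+e)²) ≤ 4eβ² ≤ 16en = 8n²/q ≤ 1/(2n²)`, using `β² ≤ ‖z‖² ≤ 4n`.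
-/

open Matrix Finset RealInnerProductSpace

lemma abs_sum_mul_sub_sum_mul_le {ι : Type*} [Fintype ι] {c c' β : ι → ℝ} {ε b : ℝ}
    (hε : 0 ≤ ε) (hb : 0 ≤ b) (hc : ∀ j, |c j - c' j| ≤ ε) (hβ : ∀ j, c j ≠ c' j → |β j| ≤ b) :
    |∑ j, c j * β j - ∑ j, c' j * β j| ≤ Fintype.card ι * (ε * b) := by
  rw [← sum_sub_distrib]
  calc |∑ j, (c j * β j - c' j * β j)| ≤ ∑ _j : ι, ε * b := by
        refine (abs_sum_le_sum_abs _ _).trans (sum_le_sum fun j _ => ?_)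
        rw [← sub_mul, abs_mul]
        by_cases hj : c j = c' j
        · simp [hj, mul_nonneg hε hb]
        · exact mul_le_mul (hc j) (hβ j hj) (abs_nonneg _) hε
    _ = Fintype.card ι * (ε * b) := by simp

lemma sq_sub_sq_div_le {b d g e : ℝ} (hb : 0 ≤ b) (he : 0 ≤ e) (hd : b * (1 - e) ≤ d)
    (he1 : e ≤ 1) (hg : 0 < g) (hge : g ≤ (1 + e) ^ 2) :
    b ^ 2 - d ^ 2 / g ≤ 4 * e * b ^ 2 := by
  have hd2 : (b * (1 - e)) ^ 2 / (1 + e) ^ 2 ≤ d ^ 2 / g := by gcongr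
  have key : b ^ 2 - (b * (1 - e)) ^ 2 / (1 + e) ^ 2 = 4 * e * b ^ 2 / (1 + e) ^ 2 := by
    field_simp
    ring
  have : 4 * e * b ^ 2 / (1 + e) ^ 2 ≤ 4 * e * b ^ 2 :=
    div_le_self (by positivity) (one_le_pow₀ (by linarith))
  linarith

section InnerProductSpace

variable {E ι : Type*} [SeminormedAddCommGroup E] [InnerProductSpace ℝ E] [Fintype ι]

lemma norm_sum_smul_sub_sum_smul_le {v : ι → E} (hv : ∀ j, ‖v j‖ ≤ 1) {c c' : ι → ℝ} {ε : ℝ}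
    (hc : ∀ j, |c j - c' j| ≤ ε) :
    ‖∑ j, c j • v j - ∑ j, c' j • v j‖ ≤ Fintype.card ι * ε := by
  rw [← sum_sub_distrib]
  calc ‖∑ j, (c j • v j - c' j • v j)‖ ≤ ∑ _j : ι, ε := by
        refine norm_sum_le_of_le _ fun j _ => ?_
        rw [← sub_smul, norm_smul, Real.norm_eq_abs]
        exact (mul_le_of_le_one_right (abs_nonneg _) (hv j)).trans (hc j)
    _ = Fintype.card ι * ε := by simp

lemma inner_sum_smul_eq_zero {x : E} {v : ι → E} (h : ∀ j, ⟪x, v j⟫ = 0) (c : ι → ℝ) :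
    ⟪x, ∑ j, c j • v j⟫ = 0 := by
  simp [inner_sum, inner_smul_right, h]

lemma norm_add_smul_sq_of_inner_eq_zero {x v : E} (h : ⟪x, v⟫ = 0) (t : ℝ) :
    ‖x + t • v‖ ^ 2 = ‖x‖ ^ 2 + t ^ 2 * ‖v‖ ^ 2 := by
  rw [norm_add_sq_real, inner_smul_right, h, norm_smul, Real.norm_eq_abs, mul_pow, sq_abs]
  ring

lemma norm_add_smul_sq_sub_norm_add_smul_sq_le {r a γ : E} {b d e : ℝ} (hra : ⟪r, a⟫ = 0)
    (hrγ : ⟪r, γ⟫ = 0) (ha : ‖a‖ = 1) (haγ : ‖a - γ‖ ≤ e) (hbd : |b - d| ≤ e * b) (hb : 0 ≤ b)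
    (he : 0 ≤ e) (he1 : e < 1) :
    ‖r + b • a‖ ^ 2 - ‖r + (d / ‖γ‖ ^ 2) • γ‖ ^ 2 ≤ 4 * e * b ^ 2 := by
  have hγ_lower : 1 - e ≤ ‖γ‖ := by linarith [norm_sub_norm_le a γ]
  have hγ_upper : ‖γ‖ ≤ 1 + e := by linarith [norm_sub_norm_le γ a, norm_sub_rev a γ]
  have hγ_pos : 0 < ‖γ‖ := by linarith
  have hd : b * (1 - e) ≤ d := by linarith [(abs_le.mp hbd).2]
  have hγ_sq : (d / ‖γ‖ ^ 2) ^ 2 * ‖γ‖ ^ 2 = d ^ 2 / ‖γ‖ ^ 2 := by field_simp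
  rw [norm_add_smul_sq_of_inner_eq_zero hra, norm_add_smul_sq_of_inner_eq_zero hrγ, ha, hγ_sq]
  have := sq_sub_sq_div_le hb he hd he1.le (by positivity) (pow_le_pow_left₀ hγ_pos.le hγ_upper 2)
  linarith

theorem rounding_multipliers_bounds {n : ℕ} (hn : 0 < n) {q : ℝ} (hq : 16 * (n : ℝ) ^ 4 ≤ q)
    {r0 : E} {α : Fin n → E} {β : Fin n → ℝ} (hα : ∀ j, ‖α j‖ = 1) (hαorth : ∀ j, ⟪r0, α j⟫ = 0)
    {lam : Fin n → ℝ} (hlam : ∀ j, 0 ≤ lam j) {a : E} (ha : a = ∑ j, lam j • α j)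
    {bb : ℝ} (hbb : bb = ∑ j, lam j * β j) (ha1 : ‖a‖ = 1) (hbbpos : 0 < bb)
    (hβbound : ∀ j, 0 < lam j → |β j| ≤ bb) {z : E} (hz : z = r0 + bb • a)
    (hznorm : ‖z‖ ≤ 2 * √n) {lamh : Fin n → ℝ} (hlamh : ∀ j, |lamh j - lam j| ≤ 1 / (2 * q))
    (hlamh0 : ∀ j, lam j = 0 → lamh j = 0) {γ : E} (hγ : γ = ∑ j, lamh j • α j)
    {δ : ℝ} (hδ : δ = ∑ j, lamh j * β j) {zt : E} (hzt : zt = r0 + (δ / ‖γ‖ ^ 2) • γ) :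
    ‖a - γ‖ ≤ n / (2 * q) ∧ |bb - δ| ≤ n * bb / (2 * q) ∧ 0 < δ ∧ γ ≠ 0 ∧
      ‖z‖ ^ 2 - ‖zt‖ ^ 2 ≤ 1 / (2 * n ^ 2) := by
  have hn1 : (1 : ℝ) ≤ n := by exact_mod_cast hn
  have hq0 : 0 < q := by nlinarith [pow_pos (by positivity : (0 : ℝ) < n) 4]
  have hε : ∀ j, |lam j - lamh j| ≤ 1 / (2 * q) := fun j => abs_sub_comm (lam j) _ ▸ hlamh j
  set e := (n : ℝ) / (2 * q) with he
  have he0 : 0 ≤ e := by positivity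
  have he1 : e ≤ 1 / 32 := by
    rw [he, div_le_div_iff₀ (by positivity) (by norm_num)]
    nlinarith [le_self_pow₀ hn1 (by norm_num : 4 ≠ 0)]
  have h1 : ‖a - γ‖ ≤ e := by
    have := norm_sum_smul_sub_sum_smul_le (fun j => (hα j).le) hε
    rw [Fintype.card_fin] at this
    rw [ha, hγ, he, ← mul_one_div]
    exact this
  have h2 : |bb - δ| ≤ e * bb := by
    have := abs_sum_mul_sub_sum_mul_le (by positivity) hbbpos.le hε (β := β)
      fun j hj => hβbound j ((hlam j).lt_of_ne fun h0 => hj (by rw [← h0, hlamh0 j h0.symm]))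
    rw [Fintype.card_fin, ← hbb, ← hδ, ← mul_assoc, mul_one_div, ← he] at this
    exact this
  have hγ0 : γ ≠ 0 := by
    rintro rfl
    rw [sub_zero, ha1] at h1
    linarith
  refine ⟨h1, by rwa [mul_div_right_comm], by nlinarith [(abs_le.mp h2).2], hγ0, ?_⟩
  have hr_a : ⟪r0, a⟫ = 0 := ha ▸ inner_sum_smul_eq_zero hαorth lam
  have hr_γ : ⟪r0, γ⟫ = 0 := hγ ▸ inner_sum_smul_eq_zero hαorth lamh
  have hbb_sq : bb ^ 2 ≤ 4 * n := by
    have := norm_add_smul_sq_of_inner_eq_zero hr_a bb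
    rw [← hz, ha1] at this
    nlinarith [pow_le_pow_left₀ (norm_nonneg z) hznorm 2, Real.sq_sqrt (Nat.cast_nonneg n)]
  calc ‖z‖ ^ 2 - ‖zt‖ ^ 2 ≤ 4 * e * bb ^ 2 := by
        rw [hz, hzt]
        exact norm_add_smul_sq_sub_norm_add_smul_sq_le hr_a hr_γ ha1 h1 h2 hbbpos.le he0
          (by linarith)
    _ ≤ 4 * e * (4 * n) := by gcongr
    _ = 8 * n ^ 2 / q := by rw [he]; field_simp; ring
    _ ≤ 1 / (2 * n ^ 2) := by
        rw [div_le_div_iff₀ hq0 (by positivity)]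
        linarith

end InnerProductSpace

/-- Claim 3 of the paper (rounding lemma): rounding the multipliers `λ_j` to within
`1/(2q)` (with `q ≥ 16n⁴`) changes the separating hyperplane, and hence `‖z‖_D²`,
by a controlled amount. -/
theorem statement11 {n : ℕ} (hn : 0 < n)
    (D : Matrix (Fin n) (Fin n) ℝ) (hD : D.PosDef)
    (q : ℝ) (hq : 16 * (n : ℝ) ^ 4 ≤ q)
    (r0 : Fin n → ℝ) (α : Fin n → Fin n → ℝ) (β : Fin n → ℝ)
    (hαunit : ∀ j, α j ⬝ᵥ D *ᵥ α j = 1)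
    (hαorth : ∀ j, r0 ⬝ᵥ D *ᵥ α j = 0)
    (lam : Fin n → ℝ) (hlam : ∀ j, 0 ≤ lam j)
    (a : Fin n → ℝ) (ha : a = ∑ j, lam j • α j)
    (bb : ℝ) (hbb : bb = ∑ j, lam j * β j)
    (haunit : a ⬝ᵥ D *ᵥ a = 1) (hbbpos : 0 < bb)
    (hβbound : ∀ j, 0 < lam j → |β j| ≤ bb)
    (z : Fin n → ℝ) (hz : z = r0 + bb • a)
    (hznorm : Real.sqrt (z ⬝ᵥ D *ᵥ z) ≤ 2 * Real.sqrt (n : ℝ))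
    (lamh : Fin n → ℝ)
    (hlamh : ∀ j, |lamh j - lam j| ≤ 1 / (2 * q))
    (hlamh0 : ∀ j, lam j = 0 → lamh j = 0)
    (γ : Fin n → ℝ) (hγ : γ = ∑ j, lamh j • α j)
    (δ : ℝ) (hδ : δ = ∑ j, lamh j * β j)
    (zt : Fin n → ℝ) (hzt : zt = r0 + (δ / (γ ⬝ᵥ D *ᵥ γ)) • γ) :
    Real.sqrt ((a - γ) ⬝ᵥ D *ᵥ (a - γ)) ≤ (n : ℝ) / (2 * q) ∧
    |bb - δ| ≤ (n : ℝ) * bb / (2 * q) ∧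
    0 < δ ∧ γ ≠ 0 ∧
    z ⬝ᵥ D *ᵥ z - zt ⬝ᵥ D *ᵥ zt ≤ 1 / (2 * (n : ℝ) ^ 2) := by
  -- `Fin n → ℝ` already carries the sup norm, so the `D`-norm is only ever reached through
  -- `rounding_multipliers_bounds`, never written as `‖·‖` here.
  let := D.toSeminormedAddCommGroup hD.posSemidef
  let := D.toInnerProductSpace hD.posSemidef
  have inner_eq (x y : Fin n → ℝ) : ⟪x, y⟫ = x ⬝ᵥ D *ᵥ y := dotProduct_comm _ _
  obtain ⟨h1, h2, h3, h4, h5⟩ := rounding_multipliers_bounds hn hq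
    (fun j => by rw [norm_eq_sqrt_real_inner, inner_eq, hαunit, Real.sqrt_one])
    (fun j => (inner_eq _ _).trans (hαorth j)) hlam ha hbb
    (by rw [norm_eq_sqrt_real_inner, inner_eq, haunit, Real.sqrt_one]) hbbpos hβbound hz
    (by rwa [norm_eq_sqrt_real_inner, inner_eq]) hlamh hlamh0 hγ hδ
    (hzt.trans (by rw [← real_inner_self_eq_norm_sq, inner_eq]))
  rw [norm_eq_sqrt_real_inner, inner_eq] at h1
  rw [← real_inner_self_eq_norm_sq, ← real_inner_self_eq_norm_sq, inner_eq, inner_eq] at h5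
  exact ⟨h1, h2, h3, h4, h5⟩
end

section
/- Let a, b ∈ ℝⁿ be D-unit vectors (‖a‖_D = ‖b‖_D = 1) with ⟨r⁰, a⟩_D = ⟨r⁰, b⟩_D = 0 for some r⁰ ∈ ℝⁿ, let c := ⟨a, b⟩_D with c² < 1, let β > 0 and β_i ∈ ℝ with |β_i| ≤ β, and set z := r⁰ + βb and rⁱ := r⁰ + β_i a. Define μ₁ := (β_i − βc)/(1 − c²), μ₂ := (β − β_i c)/(1 − c²), and z′ := r⁰ + μ₁a + μ₂b. If ‖z − rⁱ‖_D ≥ 1/n and ‖z′‖_D ≤ 2√n, then ‖z′ − r⁰‖_D² = ‖z − rⁱ‖_D² / (1 − c²), 1 − c² ≥ 1/(4n³), and |μ₁|, |μ₂| ≤ 8n³β. Consequently, for any λ ∈ ℝⁿ with λ ≥ 0, any index i, and β′ := ‖z′ − r⁰‖_D, if β′ ≥ β then the vector λ′ := (μ₁eⁱ + μ₂λ)/β′ satisfies λ′_j ≤ 8n³(λ_j + 1) for every j (where eⁱ is the i-th standard unit vector). -/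
/-!
With respect to the `D`-unit vectors `a, b`, whose Gram matrix is `G = [[1, c], [c, 1]]`, the
coefficients `(μ₁, μ₂)` solve `G μ = (βᵢ, β)`, so `‖z' - r⁰‖²_D = μᵀGμ` equals the quadratic form of
`G⁻¹ = [[1, -c], [-c, 1]] / (1 - c²)` at `(βᵢ, β)`, i.e. `‖z - rⁱ‖²_D / (1 - c²)`. Since `r⁰` is
`D`-orthogonal to `a` and `b`, `‖z' - r⁰‖²_D ≤ ‖z'‖²_D ≤ 4n`, while `‖z - rⁱ‖²_D ≥ 1/n²`; hence
`1 - c² ≥ 1/(4n³)`, and the numerators of `μ₁, μ₂` are at most `2β` in absolute value.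
-/

open Matrix

section SymmetricForm

variable {ι : Type*} [Fintype ι] {D : Matrix ι ι ℝ}

lemma Matrix.IsSymm.dotProduct_mulVec_comm (hD : D.IsSymm) (x y : ι → ℝ) :
    x ⬝ᵥ D *ᵥ y = y ⬝ᵥ D *ᵥ x := by
  rw [dotProduct_mulVec, ← mulVec_transpose, hD.eq, dotProduct_comm]

lemma Matrix.IsSymm.dotProduct_mulVec_add_self (hD : D.IsSymm) (x y : ι → ℝ) :
    (x + y) ⬝ᵥ D *ᵥ (x + y) = x ⬝ᵥ D *ᵥ x + 2 * (x ⬝ᵥ D *ᵥ y) + y ⬝ᵥ D *ᵥ y := by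
  simp only [mulVec_add, dotProduct_add, add_dotProduct]
  rw [hD.dotProduct_mulVec_comm y x]
  ring

lemma Matrix.IsSymm.dotProduct_mulVec_add_self_of_orthogonal (hD : D.IsSymm) {x y : ι → ℝ}
    (hxy : x ⬝ᵥ D *ᵥ y = 0) :
    (x + y) ⬝ᵥ D *ᵥ (x + y) = x ⬝ᵥ D *ᵥ x + y ⬝ᵥ D *ᵥ y := by
  rw [hD.dotProduct_mulVec_add_self, hxy]
  ring

lemma Matrix.IsSymm.dotProduct_mulVec_smul_add_smul (hD : D.IsSymm) (s t : ℝ) (x y : ι → ℝ) :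
    (s • x + t • y) ⬝ᵥ D *ᵥ (s • x + t • y) =
      s ^ 2 * (x ⬝ᵥ D *ᵥ x) + 2 * (x ⬝ᵥ D *ᵥ y) * s * t + t ^ 2 * (y ⬝ᵥ D *ᵥ y) := by
  rw [hD.dotProduct_mulVec_add_self]
  simp only [mulVec_smul, dotProduct_smul, smul_dotProduct, smul_eq_mul]
  ring

end SymmetricForm

/-- The quadratic form of the Gram matrix `[[1, c], [c, 1]]`. -/
def gramForm (c s t : ℝ) : ℝ := s ^ 2 + 2 * c * s * t + t ^ 2

lemma gramForm_solve {c : ℝ} (hc : 1 - c ^ 2 ≠ 0) (x y : ℝ) :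
    gramForm c ((x - y * c) / (1 - c ^ 2)) ((y - x * c) / (1 - c ^ 2)) =
      gramForm c (-x) y / (1 - c ^ 2) := by
  unfold gramForm
  field_simp
  ring

lemma one_div_four_mul_pow_three_le {n q q' d : ℝ} (hn : 0 < n) (hq : 1 / n ^ 2 ≤ q)
    (hq' : q' ≤ 4 * n) (hd : 0 ≤ d) (h : q = q' * d) : 1 / (4 * n ^ 3) ≤ d := by
  have : 1 / n ^ 2 ≤ 4 * n * d := hq.trans (h ▸ mul_le_mul_of_nonneg_right hq' hd)
  rw [div_le_iff₀ (by positivity)] at this ⊢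
  nlinarith

lemma abs_sub_mul_le_two_mul {x y c β : ℝ} (hx : |x| ≤ β) (hy : |y| ≤ β) (hc : |c| ≤ 1) :
    |x - y * c| ≤ 2 * β := by
  have : |y * c| ≤ β := by
    rw [abs_mul]
    nlinarith [abs_nonneg y, abs_nonneg c]
  linarith [abs_sub x (y * c)]

lemma abs_div_le_div_of_le {x d B ε : ℝ} (hx : |x| ≤ B) (hε : 0 < ε) (hd : ε ≤ d) :
    |x / d| ≤ B / ε := by
  rw [abs_div, abs_of_pos (hε.trans_le hd)]
  exact div_le_div₀ ((abs_nonneg x).trans hx) hx hε hd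

lemma mul_add_mul_div_le_mul_add_one {μ₁ μ₂ e l M β β' : ℝ} (h₁ : |μ₁| ≤ M * β)
    (h₂ : |μ₂| ≤ M * β) (he₀ : 0 ≤ e) (he₁ : e ≤ 1) (hl : 0 ≤ l) (hβ : 0 < β) (hββ' : β ≤ β') :
    (μ₁ * e + μ₂ * l) / β' ≤ M * (l + 1) := by
  have hMβ : 0 ≤ M * β := (abs_nonneg _).trans h₁
  have hnum : μ₁ * e + μ₂ * l ≤ M * β * (l + 1) := by
    nlinarith [le_abs_self μ₁, le_abs_self μ₂]
  calc (μ₁ * e + μ₂ * l) / β' ≤ M * β * (l + 1) / β' := by gcongr; linarith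
    _ ≤ M * β * (l + 1) / β := by gcongr
    _ = M * (l + 1) := by field_simp

/-- Claim 4's supporting computation in the paper: bounds on the multipliers
`μ₁, μ₂` of one iteration, and the resulting bound `λ'_j ≤ 8n³(λ_j + 1)`. -/
theorem statement12 {n : ℕ} (hn : 0 < n)
    (D : Matrix (Fin n) (Fin n) ℝ) (hD : D.PosDef)
    (r0 a b : Fin n → ℝ)
    (ha : a ⬝ᵥ D *ᵥ a = 1) (hb : b ⬝ᵥ D *ᵥ b = 1)
    (hra : r0 ⬝ᵥ D *ᵥ a = 0) (hrb : r0 ⬝ᵥ D *ᵥ b = 0)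
    (c : ℝ) (hc : c = a ⬝ᵥ D *ᵥ b) (hc2 : c ^ 2 < 1)
    (β βi : ℝ) (hβ : 0 < β) (hβi : |βi| ≤ β)
    (z ri : Fin n → ℝ) (hz : z = r0 + β • b) (hri : ri = r0 + βi • a)
    (μ1 μ2 : ℝ)
    (hμ1 : μ1 = (βi - β * c) / (1 - c ^ 2))
    (hμ2 : μ2 = (β - βi * c) / (1 - c ^ 2))
    (z' : Fin n → ℝ) (hz' : z' = r0 + μ1 • a + μ2 • b)
    (hdist : 1 / (n : ℝ) ≤ Real.sqrt ((z - ri) ⬝ᵥ D *ᵥ (z - ri)))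
    (hz'norm : Real.sqrt (z' ⬝ᵥ D *ᵥ z') ≤ 2 * Real.sqrt (n : ℝ)) :
    (z' - r0) ⬝ᵥ D *ᵥ (z' - r0) = ((z - ri) ⬝ᵥ D *ᵥ (z - ri)) / (1 - c ^ 2) ∧
    1 / (4 * (n : ℝ) ^ 3) ≤ 1 - c ^ 2 ∧
    |μ1| ≤ 8 * (n : ℝ) ^ 3 * β ∧ |μ2| ≤ 8 * (n : ℝ) ^ 3 * β ∧
    (∀ (lam : Fin n → ℝ), (∀ j, 0 ≤ lam j) → ∀ (i : Fin n) (β' : ℝ),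
      β' = Real.sqrt ((z' - r0) ⬝ᵥ D *ᵥ (z' - r0)) → β ≤ β' →
      ∀ j, (μ1 * (if j = i then (1 : ℝ) else 0) + μ2 * lam j) / β' ≤
        8 * (n : ℝ) ^ 3 * (lam j + 1)) := by
  have hsymm : D.IsSymm := isHermitian_iff_isSymm.mp hD.isHermitian
  have hnonneg (x : Fin n → ℝ) : 0 ≤ x ⬝ᵥ D *ᵥ x := by
    simpa using hD.posSemidef.dotProduct_mulVec_nonneg x
  have hgram (s t : ℝ) : (s • a + t • b) ⬝ᵥ D *ᵥ (s • a + t • b) = gramForm c s t := by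
    rw [hsymm.dotProduct_mulVec_smul_add_smul, ha, hb, ← hc, gramForm]
    ring
  have hgap₀ : 1 - c ^ 2 ≠ 0 := by linarith
  have hzr0 : z' - r0 = μ1 • a + μ2 • b := by rw [hz']; abel
  have hmain : (z' - r0) ⬝ᵥ D *ᵥ (z' - r0) = ((z - ri) ⬝ᵥ D *ᵥ (z - ri)) / (1 - c ^ 2) := by
    have hzri : z - ri = (-βi) • a + β • b := by rw [hz, hri]; module
    rw [hzr0, hzri, hgram, hgram, hμ1, hμ2, gramForm_solve hgap₀]
  have hpythag : z' ⬝ᵥ D *ᵥ z' = r0 ⬝ᵥ D *ᵥ r0 + (z' - r0) ⬝ᵥ D *ᵥ (z' - r0) := by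
    have hcross : r0 ⬝ᵥ D *ᵥ (μ1 • a + μ2 • b) = 0 := by
      simp only [mulVec_add, mulVec_smul, dotProduct_add, dotProduct_smul, hra, hrb, smul_zero,
        add_zero]
    rw [hzr0, hz', add_assoc, hsymm.dotProduct_mulVec_add_self_of_orthogonal hcross]
  have hnpos : (0 : ℝ) < n := by exact_mod_cast hn
  have hq_lb : 1 / (n : ℝ) ^ 2 ≤ (z - ri) ⬝ᵥ D *ᵥ (z - ri) := by
    rw [← _root_.one_div_pow, ← Real.le_sqrt (by positivity) (hnonneg _)]
    exact hdist
  have hq'_ub : (z' - r0) ⬝ᵥ D *ᵥ (z' - r0) ≤ 4 * n := by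
    rw [Real.sqrt_le_left (by positivity), mul_pow, Real.sq_sqrt hnpos.le] at hz'norm
    linarith [hnonneg r0]
  have hgap : 1 / (4 * (n : ℝ) ^ 3) ≤ 1 - c ^ 2 :=
    one_div_four_mul_pow_three_le hnpos hq_lb hq'_ub (by linarith)
      (by rw [hmain, div_mul_cancel₀ _ hgap₀])
  have hc1 : |c| ≤ 1 := abs_le_one_iff_mul_self_le_one.mpr (by nlinarith)
  have hβabs : |β| ≤ β := (abs_of_pos hβ).le
  have hcoef : 8 * (n : ℝ) ^ 3 * β = 2 * β / (1 / (4 * (n : ℝ) ^ 3)) := by field_simp; ring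
  have hμ1b : |μ1| ≤ 8 * (n : ℝ) ^ 3 * β := by
    rw [hμ1, hcoef]
    exact abs_div_le_div_of_le (abs_sub_mul_le_two_mul hβi hβabs hc1) (by positivity) hgap
  have hμ2b : |μ2| ≤ 8 * (n : ℝ) ^ 3 * β := by
    rw [hμ2, hcoef]
    exact abs_div_le_div_of_le (abs_sub_mul_le_two_mul hβabs hβi hc1) (by positivity) hgap
  refine ⟨hmain, hgap, hμ1b, hμ2b, ?_⟩
  intro lam hlam i β' _ hββ' j
  exact mul_add_mul_div_le_mul_add_one hμ1b hμ2b (by split_ifs <;> norm_num)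
    (by split_ifs <;> norm_num) (hlam j) hβ hββ'
end

section
/- For every positive integer t and every α ∈ ℝᵗ with α_j ≥ 0 for all j and Σ_{j=1}^t α_j = 2t, one has Π_{j=1}^t max{1, α_j} ≥ t + 1. Moreover, this bound is attained: the vector with one coordinate equal to t+1 and all other coordinates equal to 1 satisfies the constraints and achieves Π_{j=1}^t max{1, α_j} = t + 1. -/
lemma weier {ι : Type*} (s : Finset ι) (f : ι → ℝ) (hf : ∀ i ∈ s, 1 ≤ f i) :
    1 + ∑ i ∈ s, (f i - 1) ≤ ∏ i ∈ s, f i := by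
  induction s using Finset.cons_induction with
  | empty => simp
  | cons a s ha ih =>
    rw [Finset.sum_cons, Finset.prod_cons]
    have h1 : 1 ≤ f a := hf a (Finset.mem_cons_self a s)
    have h2 := ih (fun i hi => hf i (Finset.mem_cons_of_mem hi))
    have h3 : 0 ≤ ∑ i ∈ s, (f i - 1) :=
      Finset.sum_nonneg fun i hi => by linarith [hf i (Finset.mem_cons_of_mem hi)]
    nlinarith [mul_le_mul_of_nonneg_left h2 (by linarith : (0:ℝ) ≤ f a)]

/-- The combinatorial inequality used in Claim 4 of the paper: subject to
`α ≥ 0` and `∑ α_j = 2t`, the product `∏ max{1, α_j}` is at least `t + 1`,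
and this bound is attained. -/
theorem statement13 (t : ℕ) (ht : 0 < t) :
    (∀ α : Fin t → ℝ, (∀ j, 0 ≤ α j) → ∑ j, α j = 2 * (t : ℝ) →
      (t : ℝ) + 1 ≤ ∏ j, max 1 (α j)) ∧
    (∃ α : Fin t → ℝ, (∀ j, 0 ≤ α j) ∧ ∑ j, α j = 2 * (t : ℝ) ∧
      ∏ j, max 1 (α j) = (t : ℝ) + 1) := by
  constructor
  · intro α hα hsum
    have h := weier Finset.univ (fun j => max 1 (α j)) (fun i _ => le_max_left _ _)
    have h2 : ∑ j, (α j - 1) ≤ ∑ j : Fin t, (max 1 (α j) - 1) :=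
      Finset.sum_le_sum fun i _ => by simp [le_max_right]
    have h3 : ∑ j, (α j - 1) = (t : ℝ) := by
      rw [Finset.sum_sub_distrib, hsum]
      simp
      ring
    linarith
  · refine ⟨fun j => if j = ⟨0, ht⟩ then (t : ℝ) + 1 else 1, fun j => ?_, ?_, ?_⟩
    · dsimp only; split <;> positivity
    · rw [← Finset.sum_erase_add _ _ (Finset.mem_univ (⟨0, ht⟩ : Fin t))]
      rw [if_pos rfl, Finset.sum_congr rfl (fun j hj => if_neg (Finset.ne_of_mem_erase hj)),
        Finset.sum_const, Finset.card_erase_of_mem (Finset.mem_univ _), Finset.card_univ,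
        Fintype.card_fin]
      have : (1:ℕ) ≤ t := ht
      rw [nsmul_eq_mul, mul_one, Nat.cast_sub this]; push_cast
      ring
    · have hm : ∀ j : Fin t, max 1 ((fun j => if j = ⟨0, ht⟩ then (t : ℝ) + 1 else 1) j)
          = if j = ⟨0, ht⟩ then (t : ℝ) + 1 else 1 := by
        intro j
        dsimp only
        split
        · rw [max_eq_right (by have := Nat.cast_nonneg (α := ℝ) t; linarith)]
        · simp
      simp only [hm]
      rw [Finset.prod_ite_eq' Finset.univ (⟨0, ht⟩ : Fin t) (fun _ => (t : ℝ) + 1)]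
      simp
end

section
/- Let m be a positive integer, let u ∈ ℝᵐ with u_j > 0 for all j, and let w ∈ ℝᵐ with w_j ≥ 0 for all j and Σ_{j=1}^m u_j w_j = 2m. Define u′_j := min{u_j, 1/w_j} if w_j > 0 and u′_j := u_j if w_j = 0. Then Σ_{j=1}^m log(u_j / u′_j) ≥ log(m + 1), where log denotes the natural logarithm. -/
/-!
Write `a_j = u_j w_j`. Each ratio `u_j / u'_j` equals `max 1 a_j`, so the left side is
`log ∏ max 1 a_j`. For factors `1 + x_j` with `x_j ≥ 0` the product dominates `1 + ∑ x_j`, and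
`∑ (max 1 a_j - 1) ≥ ∑ (a_j - 1) = 2m - m = m`.
-/

open Finset

theorem Finset.one_add_sum_le_prod_one_add {ι R : Type*} [CommSemiring R] [PartialOrder R]
    [IsOrderedRing R] (s : Finset ι) {f : ι → R} (hf : ∀ i ∈ s, 0 ≤ f i) :
    1 + ∑ i ∈ s, f i ≤ ∏ i ∈ s, (1 + f i) := by
  induction s using Finset.cons_induction with
  | empty => simp
  | cons x s _ ih =>
    have hfx : 0 ≤ f x := hf x (mem_cons_self x s)
    have hs : 0 ≤ ∑ i ∈ s, f i := sum_nonneg fun i hi => hf i (mem_cons_of_mem hi)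
    rw [sum_cons, prod_cons]
    calc 1 + (f x + ∑ i ∈ s, f i) ≤ 1 + (f x + ∑ i ∈ s, f i) + f x * ∑ i ∈ s, f i :=
          le_add_of_nonneg_right (mul_nonneg hfx hs)
      _ = (1 + f x) * (1 + ∑ i ∈ s, f i) := by ring
      _ ≤ (1 + f x) * ∏ i ∈ s, (1 + f i) :=
          mul_le_mul_of_nonneg_left (ih fun i hi => hf i (mem_cons_of_mem hi))
            (add_nonneg zero_le_one hfx)

noncomputable def updatedBound (u w : ℝ) : ℝ := if 0 < w then min u (1 / w) else u

theorem div_updatedBound {u : ℝ} (hu : 0 < u) (w : ℝ) :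
    u / updatedBound u w = max 1 (u * w) := by
  unfold updatedBound
  split_ifs with hw
  · rcases le_total u (1 / w) with h | h
    · rw [min_eq_left h, div_self hu.ne', max_eq_left ((le_div_iff₀ hw).mp h)]
    · rw [min_eq_right h, max_eq_right ((div_le_iff₀ hw).mp h), one_div, div_inv_eq_mul]
  · rw [div_self hu.ne', max_eq_left
      ((mul_nonpos_of_nonneg_of_nonpos hu.le (not_lt.mp hw)).trans zero_le_one)]

theorem statement14_general (m : ℕ)
    (u w : Fin m → ℝ) (hu : ∀ j, 0 < u j)
    (hsum : ∑ j, u j * w j = 2 * (m : ℝ))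
    (u' : Fin m → ℝ)
    (hu' : ∀ j, u' j = if 0 < w j then min (u j) (1 / w j) else u j) :
    Real.log ((m : ℝ) + 1) ≤ ∑ j, Real.log (u j / u' j) := by
  have hratio : ∀ j, u j / u' j = max 1 (u j * w j) := fun j => by
    rw [hu' j]; exact div_updatedBound (hu j) (w j)
  set excess := ∑ j, (max 1 (u j * w j) - 1)
  have hexcess : (m : ℝ) ≤ excess := calc
    (m : ℝ) = ∑ j, (u j * w j - 1) := by
      simp only [sum_sub_distrib, hsum, sum_const, card_univ, Fintype.card_fin, nsmul_eq_mul,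
        mul_one]
      ring
    _ ≤ excess := sum_le_sum fun j _ => sub_le_sub_right (le_max_right _ _) 1
  calc Real.log ((m : ℝ) + 1) ≤ Real.log (1 + excess) :=
        Real.log_le_log (by positivity) (by linarith)
    _ ≤ Real.log (∏ j, (1 + (max 1 (u j * w j) - 1))) :=
        Real.log_le_log (by linarith [(m.cast_nonneg : (0 : ℝ) ≤ m)])
          (one_add_sum_le_prod_one_add _ fun j _ => sub_nonneg.2 (le_max_left _ _))
    _ = ∑ j, Real.log (u j / u' j) := by
        simp only [add_sub_cancel, hratio]
        exact Real.log_prod fun j _ => by positivity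

/-- The potential-decrease inequality of Claim 4 of the paper: one bound-update
step on `m` variables decreases the potential `∑ log u_j` by at least `log(m+1)`. -/
theorem statement14 (m : ℕ) (hm : 0 < m)
    (u w : Fin m → ℝ) (hu : ∀ j, 0 < u j) (hw : ∀ j, 0 ≤ w j)
    (hsum : ∑ j, u j * w j = 2 * (m : ℝ))
    (u' : Fin m → ℝ)
    (hu' : ∀ j, u' j = if 0 < w j then min (u j) (1 / w j) else u j) :
    Real.log ((m : ℝ) + 1) ≤ ∑ j, Real.log (u j / u' j) :=
  statement14_general m u w hu hsum u' hu'
end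

section
/- Let n be a positive integer, μ ≥ 0 a real number, and p ∈ ℝⁿ with p_i ≥ 0 for all i. Suppose Σ_{i=1}^k p_i ≥ kμ for every k = 1,…,n−1, and Σ_{i=1}^n p_i ≤ nμ. Then Σ_{i=1}^n p_i / log(n − i + 2) ≤ μ · Σ_{i=1}^n 1 / log(n − i + 2), where log denotes the natural logarithm. (Equivalently, the linear program maximizing Σ_i p_i/log(n−i+2) subject to these constraints has optimal solution p_i = μ for all i.) -/
/-- The bound on the linear program (10) of the paper: subject to the prefix
constraints `∑_{i≤k} p_i ≥ kμ` (for `k = 1, …, n−1`) and `∑_i p_i ≤ nμ`, the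
objective `∑_i p_i / log(n−i+2)` is maximized by `p_i = μ` for all `i`. -/
theorem statement16 (n : ℕ) (hn : 0 < n) (μ : ℝ) (hμ : 0 ≤ μ)
    (p : Fin n → ℝ) (hp : ∀ i, 0 ≤ p i)
    (hpart : ∀ k : ℕ, 1 ≤ k → k ≤ n - 1 →
      (k : ℝ) * μ ≤ ∑ i ∈ Finset.univ.filter (fun i : Fin n => (i : ℕ) < k), p i)
    (htot : ∑ i, p i ≤ (n : ℝ) * μ) :
    ∑ i : Fin n, p i / Real.log ((n : ℝ) - (i : ℕ) + 1) ≤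
      μ * ∑ i : Fin n, 1 / Real.log ((n : ℝ) - (i : ℕ) + 1) := by
  classical
  set c : ℕ → ℝ := fun i => 1 / Real.log ((n : ℝ) - i + 1) with hc
  set P : ℕ → ℝ := fun i => if h : i < n then p ⟨i, h⟩ else 0 with hP
  have PP : ∀ i : Fin n, P (i : ℕ) = p i := by
    intro i; simp [hP, i.isLt]
  have hlog : ∀ i : ℕ, i < n → 0 < Real.log ((n : ℝ) - i + 1) := by
    intro i hi
    apply Real.log_pos
    have : (i : ℝ) + 1 ≤ n := by exact_mod_cast hi
    linarith
  have hcpos : ∀ i : ℕ, i < n → 0 < c i := fun i hi => by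
    simpa [hc] using one_div_pos.mpr (hlog i hi)
  have hcmono : ∀ i : ℕ, i < n - 1 → c i ≤ c (i + 1) := by
    intro i hi
    have h2 : (i : ℝ) + 2 ≤ n := by exact_mod_cast Nat.add_le_of_le_sub hn (by omega)
    have hb : Real.log ((n : ℝ) - (i + 1 : ℕ) + 1) ≤ Real.log ((n : ℝ) - i + 1) := by
      apply Real.log_le_log (by push_cast; linarith)
      push_cast; linarith
    have ha : 0 < Real.log ((n : ℝ) - (i + 1 : ℕ) + 1) := hlog (i + 1) (by omega)
    exact one_div_le_one_div_of_le ha hb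
  have hpre : ∀ k : ℕ, k ≤ n →
      ∑ i ∈ Finset.univ.filter (fun i : Fin n => (i : ℕ) < k), p i
        = ∑ i ∈ Finset.range k, P i := by
    intro k hk
    rw [Finset.sum_filter]
    calc ∑ i : Fin n, (if (i : ℕ) < k then p i else 0)
        = ∑ i : Fin n, (fun j => if j < k then P j else 0) (i : ℕ) := by
          apply Finset.sum_congr rfl; intro i _; simp only [PP]
      _ = ∑ i ∈ Finset.range n, (if i < k then P i else 0) :=
          Fin.sum_univ_eq_sum_range (fun j => if j < k then P j else 0) n
      _ = ∑ i ∈ (Finset.range n).filter (· < k), P i := (Finset.sum_filter _ _).symm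
      _ = ∑ i ∈ Finset.range k, P i := by
          congr 1; ext i; simp only [Finset.mem_filter, Finset.mem_range]; omega
  have htot' : ∑ i ∈ Finset.range n, P i ≤ (n : ℝ) * μ := by
    rw [← Fin.sum_univ_eq_sum_range P n]
    calc ∑ i : Fin n, P (i : ℕ) = ∑ i, p i := Finset.sum_congr rfl fun i _ => PP i
      _ ≤ (n : ℝ) * μ := htot
  have hobj : ∑ i : Fin n, p i / Real.log ((n : ℝ) - (i : ℕ) + 1)
      = ∑ i ∈ Finset.range n, P i * c i := by
    rw [← Fin.sum_univ_eq_sum_range (fun i => P i * c i) n]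
    apply Finset.sum_congr rfl
    intro i _
    rw [PP, hc, div_eq_mul_one_div]
  have hobj2 : ∑ i : Fin n, 1 / Real.log ((n : ℝ) - (i : ℕ) + 1)
      = ∑ i ∈ Finset.range n, c i := Fin.sum_univ_eq_sum_range c n
  rw [hobj, hobj2]
  have key : ∑ i ∈ Finset.range n, c i * (P i - μ) ≤ 0 := by
    have byparts := Finset.sum_range_by_parts c (fun i => P i - μ) n
    simp only [smul_eq_mul] at byparts
    rw [byparts]
    have h1 : c (n - 1) * (∑ j ∈ Finset.range n, (P j - μ)) ≤ 0 := by
      apply mul_nonpos_of_nonneg_of_nonpos (hcpos (n - 1) (by omega)).le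
      rw [Finset.sum_sub_distrib, Finset.sum_const, Finset.card_range]
      simp only [nsmul_eq_mul]
      linarith
    have h2 : 0 ≤ ∑ i ∈ Finset.range (n - 1),
        (c (i + 1) - c i) * ∑ j ∈ Finset.range (i + 1), (P j - μ) := by
      apply Finset.sum_nonneg
      intro i hi
      rw [Finset.mem_range] at hi
      apply mul_nonneg (by linarith [hcmono i hi])
      rw [Finset.sum_sub_distrib, Finset.sum_const, Finset.card_range]
      simp only [nsmul_eq_mul]
      have := hpart (i + 1) (by omega) (by omega)
      rw [hpre (i + 1) (by omega)] at this
      push_cast at this ⊢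
      linarith
    linarith
  have expand : ∑ i ∈ Finset.range n, c i * (P i - μ)
      = (∑ i ∈ Finset.range n, P i * c i) - μ * ∑ i ∈ Finset.range n, c i := by
    rw [Finset.mul_sum, ← Finset.sum_sub_distrib]
    apply Finset.sum_congr rfl
    intro i _; ring
  linarith [expand ▸ key]
end
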